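/- arXiv:2508.07867 — 2 statements merged into one kernel-verified Lean document; each statement's English description precedes it below -/
import Mathlib

section
/- Under the hypotheses in the context, for all x, y ∈ ℝ^d and ξ, η ∈ F one has |g(x+y, ξ+η) − g(x+y, ξ) − g(x, ξ+η) + g(x, ξ) − D_x D_ξ g(x,ξ) η y| ≤ α ‖y‖ ‖η‖ (‖y‖ + ‖η‖). -/
open Set

/-! Apply the mean value inequality twice, each time with the linear part `Dxξ x ξ η y`
subtracted: first along `x ↦ x + s • y` to compare the `ξ`-derivatives at `x + y` and `x`
with `Dxξ x ξ η y`, then along `ξ ↦ ξ + t • η` for `ξ' ↦ g (x + y) ξ' - g x ξ'`. The Lipschitz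
bound on `Dxξ` controls the first step, whose error then bounds the second. -/

theorem norm_sub_sub_le_of_norm_lineDeriv_sub_le {E G : Type*}
    [NormedAddCommGroup E] [NormedSpace ℝ E] [NormedAddCommGroup G] [NormedSpace ℝ G]
    {f : E → G} {f' : E → E →L[ℝ] G} {a h : E} {v : G} {C : ℝ}
    (hf : ∀ t ∈ Icc (0 : ℝ) 1, HasFDerivAt f (f' (a + t • h)) (a + t • h))
    (bound : ∀ t ∈ Icc (0 : ℝ) 1, ‖f' (a + t • h) h - v‖ ≤ C) :
    ‖f (a + h) - f a - v‖ ≤ C := by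
  have hderiv : ∀ t ∈ Icc (0 : ℝ) 1,
      HasDerivWithinAt (fun t : ℝ => f (a + t • h) - t • v)
        (f' (a + t • h) h - v) (Icc 0 1) t := by
    intro t ht
    have hline : HasDerivAt (fun t : ℝ => a + t • h) h t := by
      simpa using ((hasDerivAt_id t).smul_const h).const_add a
    have hcorr : HasDerivAt (fun t : ℝ => t • v) v t := by
      simpa using (hasDerivAt_id t).smul_const v
    exact (((hf t ht).comp_hasDerivAt t hline).sub hcorr).hasDerivWithinAt
  have := norm_image_sub_le_of_norm_deriv_le_segment_01' hderiv
    fun t ht => bound t (Ico_subset_Icc_self ht)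
  simp only [one_smul, zero_smul, add_zero, sub_zero] at this
  rwa [sub_right_comm]

theorem norm_smul_le_of_mem_Icc {E : Type*} [SeminormedAddCommGroup E] [NormedSpace ℝ E]
    {t : ℝ} (ht : t ∈ Icc (0 : ℝ) 1) (h : E) : ‖t • h‖ ≤ ‖h‖ := by
  rw [norm_smul, Real.norm_of_nonneg ht.1]
  exact mul_le_of_le_one_left (norm_nonneg h) ht.2

theorem mixed_difference_estimate_general {d : ℕ} {F : Type*}
    [NormedAddCommGroup F] [NormedSpace ℝ F]
    (g : EuclideanSpace ℝ (Fin d) → F → ℝ)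
    (Dξ : EuclideanSpace ℝ (Fin d) → F → (F →L[ℝ] ℝ))
    (Dxξ : EuclideanSpace ℝ (Fin d) → F → F → (EuclideanSpace ℝ (Fin d) →L[ℝ] ℝ))
    (hDξ : ∀ (x : EuclideanSpace ℝ (Fin d)) (ξ : F),
      HasFDerivAt (fun ξ' => g x ξ') (Dξ x ξ) ξ)
    (hDxξ : ∀ (ξ ζ : F) (x : EuclideanSpace ℝ (Fin d)),
      HasFDerivAt (fun x' => Dξ x' ξ ζ) (Dxξ x ξ ζ) x)
    (α : ℝ) (hα : 0 ≤ α)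
    (hLipxξ : ∀ (x y z : EuclideanSpace ℝ (Fin d)) (ξ η ζ : F),
      |Dxξ x ξ ζ z - Dxξ y η ζ z| ≤ α * ‖z‖ * ‖ζ‖ * (‖x - y‖ + ‖ξ - η‖)) :
    ∀ (x y : EuclideanSpace ℝ (Fin d)) (ξ η : F),
      |g (x + y) (ξ + η) - g (x + y) ξ - g x (ξ + η) + g x ξ - Dxξ x ξ η y|
        ≤ α * ‖y‖ * ‖η‖ * (‖y‖ + ‖η‖) := by
  intro x y ξ η
  have hx : ∀ t ∈ Icc (0 : ℝ) 1, ‖(Dξ (x + y) (ξ + t • η) - Dξ x (ξ + t • η)) η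
      - Dxξ x ξ η y‖ ≤ α * ‖y‖ * ‖η‖ * (‖y‖ + ‖η‖) := fun t ht =>
    norm_sub_sub_le_of_norm_lineDeriv_sub_le (f := fun x' => Dξ x' (ξ + t • η) η)
      (f' := fun x' => Dxξ x' (ξ + t • η) η)
      (fun s _ => hDxξ _ _ _) fun s hs => by
        calc ‖Dxξ (x + s • y) (ξ + t • η) η y - Dxξ x ξ η y‖
            ≤ α * ‖y‖ * ‖η‖ * (‖x + s • y - x‖ + ‖ξ + t • η - ξ‖) :=
              hLipxξ (x + s • y) x y (ξ + t • η) ξ η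
          _ ≤ α * ‖y‖ * ‖η‖ * (‖y‖ + ‖η‖) := by
              simp only [add_sub_cancel_left]
              gcongr
              exacts [norm_smul_le_of_mem_Icc hs y, norm_smul_le_of_mem_Icc ht η]
  have hξ := norm_sub_sub_le_of_norm_lineDeriv_sub_le (f := fun ξ' => g (x + y) ξ' - g x ξ')
    (f' := fun ξ' => Dξ (x + y) ξ' - Dξ x ξ')
    (fun t _ => (hDξ _ _).sub (hDξ _ _)) hx
  rw [Real.norm_eq_abs] at hξ
  convert hξ using 2
  ring

/-- second-order Taylor-type estimate for the mixed difference of `g`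
(used in the proof of Lemma 5.5 of the paper). -/
theorem mixed_difference_estimate {d : ℕ} {F : Type*}
    [NormedAddCommGroup F] [NormedSpace ℝ F]
    (g : EuclideanSpace ℝ (Fin d) → F → ℝ)
    (Dx : EuclideanSpace ℝ (Fin d) → F → (EuclideanSpace ℝ (Fin d) →L[ℝ] ℝ))
    (Dξ : EuclideanSpace ℝ (Fin d) → F → (F →L[ℝ] ℝ))
    (Dxξ : EuclideanSpace ℝ (Fin d) → F → F → (EuclideanSpace ℝ (Fin d) →L[ℝ] ℝ))
    (Dξx : EuclideanSpace ℝ (Fin d) → F → EuclideanSpace ℝ (Fin d) → (F →L[ℝ] ℝ))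
    (hDx : ∀ (ξ : F) (x : EuclideanSpace ℝ (Fin d)),
      HasFDerivAt (fun x' => g x' ξ) (Dx x ξ) x)
    (hDxCont : ∀ ξ : F, Continuous (fun x => Dx x ξ))
    (hDξ : ∀ (x : EuclideanSpace ℝ (Fin d)) (ξ : F),
      HasFDerivAt (fun ξ' => g x ξ') (Dξ x ξ) ξ)
    (hDξCont : ∀ x : EuclideanSpace ℝ (Fin d), Continuous (fun ξ => Dξ x ξ))
    (hDxξ : ∀ (ξ ζ : F) (x : EuclideanSpace ℝ (Fin d)),
      HasFDerivAt (fun x' => Dξ x' ξ ζ) (Dxξ x ξ ζ) x)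
    (hDξx : ∀ (x z : EuclideanSpace ℝ (Fin d)) (ξ : F),
      HasFDerivAt (fun ξ' => Dx x ξ' z) (Dξx x ξ z) ξ)
    (α : ℝ) (hα : 0 ≤ α)
    (hLipxξ : ∀ (x y z : EuclideanSpace ℝ (Fin d)) (ξ η ζ : F),
      |Dxξ x ξ ζ z - Dxξ y η ζ z| ≤ α * ‖z‖ * ‖ζ‖ * (‖x - y‖ + ‖ξ - η‖))
    (hLipξx : ∀ (x y z : EuclideanSpace ℝ (Fin d)) (ξ η ζ : F),
      |Dξx x ξ z ζ - Dξx y η z ζ| ≤ α * ‖z‖ * ‖ζ‖ * (‖x - y‖ + ‖ξ - η‖)) :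
    ∀ (x y : EuclideanSpace ℝ (Fin d)) (ξ η : F),
      |g (x + y) (ξ + η) - g (x + y) ξ - g x (ξ + η) + g x ξ - Dxξ x ξ η y|
        ≤ α * ‖y‖ * ‖η‖ * (‖y‖ + ‖η‖) :=
  mixed_difference_estimate_general g Dξ Dxξ hDξ hDxξ α hα hLipxξ
end

section
/- Under the hypotheses in the context, the mixed Fréchet derivatives coincide: for all x, y ∈ ℝ^d and ξ, η ∈ F one has D_x D_ξ g(x,ξ) η y = D_ξ D_x g(x,ξ) y η. -/
open Set

private lemma deriv_bound' {f f' : ℝ → ℝ} {t C : ℝ} (ht : 0 ≤ t)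
    (hf : ∀ s ∈ Icc (0:ℝ) t, HasDerivAt f (f' s) s)
    (hb : ∀ s ∈ Icc (0:ℝ) t, |f' s| ≤ C) : |f t - f 0| ≤ C * t := by
  have := (convex_Icc (0:ℝ) t).norm_image_sub_le_of_norm_hasDerivWithin_le
    (fun s hs => (hf s hs).hasDerivWithinAt) (fun s hs => by simpa using hb s hs)
    (left_mem_Icc.2 ht) (right_mem_Icc.2 ht)
  simpa [Real.norm_eq_abs, abs_of_nonneg ht] using this

/-- Lemma 5.5 of the paper: the mixed Fréchet derivatives of `g`
coincide: `D_x D_ξ g(x,ξ) η y = D_ξ D_x g(x,ξ) y η`. -/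
theorem mixed_derivatives_commute {d : ℕ} {F : Type*}
    [NormedAddCommGroup F] [NormedSpace ℝ F]
    (g : EuclideanSpace ℝ (Fin d) → F → ℝ)
    (Dx : EuclideanSpace ℝ (Fin d) → F → (EuclideanSpace ℝ (Fin d) →L[ℝ] ℝ))
    (Dξ : EuclideanSpace ℝ (Fin d) → F → (F →L[ℝ] ℝ))
    (Dxξ : EuclideanSpace ℝ (Fin d) → F → F → (EuclideanSpace ℝ (Fin d) →L[ℝ] ℝ))
    (Dξx : EuclideanSpace ℝ (Fin d) → F → EuclideanSpace ℝ (Fin d) → (F →L[ℝ] ℝ))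
    (hDx : ∀ (ξ : F) (x : EuclideanSpace ℝ (Fin d)),
      HasFDerivAt (fun x' => g x' ξ) (Dx x ξ) x)
    (hDxCont : ∀ ξ : F, Continuous (fun x => Dx x ξ))
    (hDξ : ∀ (x : EuclideanSpace ℝ (Fin d)) (ξ : F),
      HasFDerivAt (fun ξ' => g x ξ') (Dξ x ξ) ξ)
    (hDξCont : ∀ x : EuclideanSpace ℝ (Fin d), Continuous (fun ξ => Dξ x ξ))
    (hDxξ : ∀ (ξ ζ : F) (x : EuclideanSpace ℝ (Fin d)),
      HasFDerivAt (fun x' => Dξ x' ξ ζ) (Dxξ x ξ ζ) x)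
    (hDξx : ∀ (x z : EuclideanSpace ℝ (Fin d)) (ξ : F),
      HasFDerivAt (fun ξ' => Dx x ξ' z) (Dξx x ξ z) ξ)
    (α : ℝ) (hα : 0 ≤ α)
    (hLipxξ : ∀ (x y z : EuclideanSpace ℝ (Fin d)) (ξ η ζ : F),
      |Dxξ x ξ ζ z - Dxξ y η ζ z| ≤ α * ‖z‖ * ‖ζ‖ * (‖x - y‖ + ‖ξ - η‖))
    (hLipξx : ∀ (x y z : EuclideanSpace ℝ (Fin d)) (ξ η ζ : F),
      |Dξx x ξ z ζ - Dξx y η z ζ| ≤ α * ‖z‖ * ‖ζ‖ * (‖x - y‖ + ‖ξ - η‖)) :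
    ∀ (x y : EuclideanSpace ℝ (Fin d)) (ξ η : F),
      Dxξ x ξ η y = Dξx x ξ y η := by
  intro x y ξ η
  set A := Dxξ x ξ η y with hA
  set B := Dξx x ξ y η with hB
  set K : ℝ := α * ‖y‖ * ‖η‖ * (‖y‖ + ‖η‖) with hK
  have hKnn : 0 ≤ K := by positivity
  -- Step 1: Taylor expansion in ξ direction of Dx · y
  have step1 : ∀ (x' : EuclideanSpace ℝ (Fin d)) (t : ℝ), 0 ≤ t →
      |Dx x' (ξ + t • η) y - Dx x' ξ y - t * Dξx x' ξ y η|
        ≤ α * ‖y‖ * ‖η‖ ^ 2 * t ^ 2 := by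
    intro x' t ht
    have hderiv : ∀ u ∈ Icc (0:ℝ) t, HasDerivAt
        (fun u : ℝ => Dx x' (ξ + u • η) y - u * Dξx x' ξ y η)
        (Dξx x' (ξ + u • η) y η - Dξx x' ξ y η) u := by
      intro u _
      have h1 : HasDerivAt (fun u : ℝ => ξ + u • η) η u := by
        simpa using ((hasDerivAt_id u).smul_const η).const_add ξ
      exact ((hDξx x' y (ξ + u • η)).comp_hasDerivAt u h1).sub (hasDerivAt_mul_const _)
    have hbound : ∀ u ∈ Icc (0:ℝ) t,
        |Dξx x' (ξ + u • η) y η - Dξx x' ξ y η| ≤ α * ‖y‖ * ‖η‖ ^ 2 * t := by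
      intro u hu
      have h := hLipξx x' x' y (ξ + u • η) ξ η
      have h2 : ‖ξ + u • η - ξ‖ = |u| * ‖η‖ := by
        simp [norm_smul, Real.norm_eq_abs]
      rw [sub_self, norm_zero, zero_add, h2] at h
      have hu' : |u| ≤ t := by rw [abs_of_nonneg hu.1]; exact hu.2
      calc |Dξx x' (ξ + u • η) y η - Dξx x' ξ y η|
          ≤ α * ‖y‖ * ‖η‖ * (|u| * ‖η‖) := h
        _ = α * ‖y‖ * ‖η‖ ^ 2 * |u| := by ring
        _ ≤ α * ‖y‖ * ‖η‖ ^ 2 * t := by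
            exact mul_le_mul_of_nonneg_left hu' (by positivity)
    have h := deriv_bound' ht hderiv hbound
    simp only [zero_smul, add_zero, zero_mul, sub_zero] at h
    have e : Dx x' (ξ + t • η) y - t * Dξx x' ξ y η - Dx x' ξ y
        = Dx x' (ξ + t • η) y - Dx x' ξ y - t * Dξx x' ξ y η := by ring
    rw [e] at h
    calc _ ≤ α * ‖y‖ * ‖η‖ ^ 2 * t * t := h
      _ = α * ‖y‖ * ‖η‖ ^ 2 * t ^ 2 := by ring
  -- Step 1': Taylor expansion in x direction of Dξ · η
  have step1' : ∀ (ζ : F) (t : ℝ), 0 ≤ t →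
      |Dξ (x + t • y) ζ η - Dξ x ζ η - t * Dxξ x ζ η y|
        ≤ α * ‖η‖ * ‖y‖ ^ 2 * t ^ 2 := by
    intro ζ t ht
    have hderiv : ∀ u ∈ Icc (0:ℝ) t, HasDerivAt
        (fun u : ℝ => Dξ (x + u • y) ζ η - u * Dxξ x ζ η y)
        (Dxξ (x + u • y) ζ η y - Dxξ x ζ η y) u := by
      intro u _
      have h1 : HasDerivAt (fun u : ℝ => x + u • y) y u := by
        simpa using ((hasDerivAt_id u).smul_const y).const_add x
      exact ((hDxξ ζ η (x + u • y)).comp_hasDerivAt u h1).sub (hasDerivAt_mul_const _)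
    have hbound : ∀ u ∈ Icc (0:ℝ) t,
        |Dxξ (x + u • y) ζ η y - Dxξ x ζ η y| ≤ α * ‖η‖ * ‖y‖ ^ 2 * t := by
      intro u hu
      have h := hLipxξ (x + u • y) x y ζ ζ η
      have h2 : ‖x + u • y - x‖ = |u| * ‖y‖ := by
        simp [norm_smul, Real.norm_eq_abs]
      rw [sub_self, norm_zero, add_zero, h2] at h
      have hu' : |u| ≤ t := by rw [abs_of_nonneg hu.1]; exact hu.2
      calc |Dxξ (x + u • y) ζ η y - Dxξ x ζ η y|
          ≤ α * ‖y‖ * ‖η‖ * (|u| * ‖y‖) := h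
        _ = α * ‖η‖ * ‖y‖ ^ 2 * |u| := by ring
        _ ≤ α * ‖η‖ * ‖y‖ ^ 2 * t := by
            exact mul_le_mul_of_nonneg_left hu' (by positivity)
    have h := deriv_bound' ht hderiv hbound
    simp only [zero_smul, add_zero, zero_mul, sub_zero] at h
    have e : Dξ (x + t • y) ζ η - t * Dxξ x ζ η y - Dξ x ζ η
        = Dξ (x + t • y) ζ η - Dξ x ζ η - t * Dxξ x ζ η y := by ring
    rw [e] at h
    calc _ ≤ α * ‖η‖ * ‖y‖ ^ 2 * t * t := h
      _ = α * ‖η‖ * ‖y‖ ^ 2 * t ^ 2 := by ring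
  -- The double increment
  set Δ : ℝ → ℝ := fun t =>
    g (x + t • y) (ξ + t • η) - g (x + t • y) ξ - g x (ξ + t • η) + g x ξ with hΔ
  -- Step 2: |Δ t - t² B| ≤ K t³
  have claimB : ∀ t : ℝ, 0 ≤ t → |Δ t - t ^ 2 * B| ≤ K * t ^ 3 := by
    intro t ht
    have hderiv : ∀ s ∈ Icc (0:ℝ) t, HasDerivAt
        (fun s : ℝ => g (x + s • y) (ξ + t • η) - g (x + s • y) ξ - s * (t * B))
        (Dx (x + s • y) (ξ + t • η) y - Dx (x + s • y) ξ y - t * B) s := by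
      intro s _
      have h1 : HasDerivAt (fun s : ℝ => x + s • y) y s := by
        simpa using ((hasDerivAt_id s).smul_const y).const_add x
      exact (((hDx (ξ + t • η) (x + s • y)).comp_hasDerivAt s h1).sub
        ((hDx ξ (x + s • y)).comp_hasDerivAt s h1)).sub (hasDerivAt_mul_const _)
    have hbound : ∀ s ∈ Icc (0:ℝ) t,
        |Dx (x + s • y) (ξ + t • η) y - Dx (x + s • y) ξ y - t * B| ≤ K * t ^ 2 := by
      intro s hs
      have h1 := step1 (x + s • y) t ht
      have h2 := hLipξx (x + s • y) x y ξ ξ η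
      have e2 : ‖x + s • y - x‖ = |s| * ‖y‖ := by
        simp [norm_smul, Real.norm_eq_abs]
      rw [sub_self, norm_zero, add_zero, e2] at h2
      have hs' : |s| ≤ t := by rw [abs_of_nonneg hs.1]; exact hs.2
      have h3 : |t * Dξx (x + s • y) ξ y η - t * B|
          ≤ α * ‖y‖ ^ 2 * ‖η‖ * t ^ 2 := by
        rw [← mul_sub, abs_mul, abs_of_nonneg ht]
        calc t * |Dξx (x + s • y) ξ y η - B|
            ≤ t * (α * ‖y‖ * ‖η‖ * (|s| * ‖y‖)) :=
              mul_le_mul_of_nonneg_left h2 ht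
          _ = α * ‖y‖ ^ 2 * ‖η‖ * (t * |s|) := by ring
          _ ≤ α * ‖y‖ ^ 2 * ‖η‖ * (t * t) := by
              exact mul_le_mul_of_nonneg_left
                (mul_le_mul_of_nonneg_left hs' ht) (by positivity)
          _ = α * ‖y‖ ^ 2 * ‖η‖ * t ^ 2 := by ring
      calc |Dx (x + s • y) (ξ + t • η) y - Dx (x + s • y) ξ y - t * B|
          = |(Dx (x + s • y) (ξ + t • η) y - Dx (x + s • y) ξ y
              - t * Dξx (x + s • y) ξ y η)
            + (t * Dξx (x + s • y) ξ y η - t * B)| := by ring_nf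
        _ ≤ |Dx (x + s • y) (ξ + t • η) y - Dx (x + s • y) ξ y
              - t * Dξx (x + s • y) ξ y η|
            + |t * Dξx (x + s • y) ξ y η - t * B| := abs_add_le _ _
        _ ≤ α * ‖y‖ * ‖η‖ ^ 2 * t ^ 2 + α * ‖y‖ ^ 2 * ‖η‖ * t ^ 2 :=
            add_le_add h1 h3
        _ = K * t ^ 2 := by rw [hK]; ring
    have h := deriv_bound' ht hderiv hbound
    simp only [zero_smul, add_zero, zero_mul, sub_zero] at h
    have e : g (x + t • y) (ξ + t • η) - g (x + t • y) ξ - t * (t * B)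
        - (g x (ξ + t • η) - g x ξ) = Δ t - t ^ 2 * B := by rw [hΔ]; ring
    rw [e] at h
    calc |Δ t - t ^ 2 * B| ≤ K * t ^ 2 * t := h
      _ = K * t ^ 3 := by ring
  -- Step 2': |Δ t - t² A| ≤ K t³
  have claimA : ∀ t : ℝ, 0 ≤ t → |Δ t - t ^ 2 * A| ≤ K * t ^ 3 := by
    intro t ht
    have hderiv : ∀ u ∈ Icc (0:ℝ) t, HasDerivAt
        (fun u : ℝ => g (x + t • y) (ξ + u • η) - g x (ξ + u • η) - u * (t * A))
        (Dξ (x + t • y) (ξ + u • η) η - Dξ x (ξ + u • η) η - t * A) u := by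
      intro u _
      have h1 : HasDerivAt (fun u : ℝ => ξ + u • η) η u := by
        simpa using ((hasDerivAt_id u).smul_const η).const_add ξ
      exact (((hDξ (x + t • y) (ξ + u • η)).comp_hasDerivAt u h1).sub
        ((hDξ x (ξ + u • η)).comp_hasDerivAt u h1)).sub (hasDerivAt_mul_const _)
    have hbound : ∀ u ∈ Icc (0:ℝ) t,
        |Dξ (x + t • y) (ξ + u • η) η - Dξ x (ξ + u • η) η - t * A| ≤ K * t ^ 2 := by
      intro u hu
      have h1 := step1' (ξ + u • η) t ht
      have h2 := hLipxξ x x y (ξ + u • η) ξ η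
      have e2 : ‖ξ + u • η - ξ‖ = |u| * ‖η‖ := by
        simp [norm_smul, Real.norm_eq_abs]
      rw [sub_self, norm_zero, zero_add, e2] at h2
      have hu' : |u| ≤ t := by rw [abs_of_nonneg hu.1]; exact hu.2
      have h3 : |t * Dxξ x (ξ + u • η) η y - t * A|
          ≤ α * ‖y‖ * ‖η‖ ^ 2 * t ^ 2 := by
        rw [← mul_sub, abs_mul, abs_of_nonneg ht]
        calc t * |Dxξ x (ξ + u • η) η y - A|
            ≤ t * (α * ‖y‖ * ‖η‖ * (|u| * ‖η‖)) :=
              mul_le_mul_of_nonneg_left h2 ht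
          _ = α * ‖y‖ * ‖η‖ ^ 2 * (t * |u|) := by ring
          _ ≤ α * ‖y‖ * ‖η‖ ^ 2 * (t * t) := by
              exact mul_le_mul_of_nonneg_left
                (mul_le_mul_of_nonneg_left hu' ht) (by positivity)
          _ = α * ‖y‖ * ‖η‖ ^ 2 * t ^ 2 := by ring
      calc |Dξ (x + t • y) (ξ + u • η) η - Dξ x (ξ + u • η) η - t * A|
          = |(Dξ (x + t • y) (ξ + u • η) η - Dξ x (ξ + u • η) η
              - t * Dxξ x (ξ + u • η) η y)
            + (t * Dxξ x (ξ + u • η) η y - t * A)| := by ring_nf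
        _ ≤ |Dξ (x + t • y) (ξ + u • η) η - Dξ x (ξ + u • η) η
              - t * Dxξ x (ξ + u • η) η y|
            + |t * Dxξ x (ξ + u • η) η y - t * A| := abs_add_le _ _
        _ ≤ α * ‖η‖ * ‖y‖ ^ 2 * t ^ 2 + α * ‖y‖ * ‖η‖ ^ 2 * t ^ 2 :=
            add_le_add h1 h3
        _ = K * t ^ 2 := by rw [hK]; ring
    have h := deriv_bound' ht hderiv hbound
    simp only [zero_smul, add_zero, zero_mul, sub_zero] at h
    have e : g (x + t • y) (ξ + t • η) - g x (ξ + t • η) - t * (t * A)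
        - (g (x + t • y) ξ - g x ξ) = Δ t - t ^ 2 * A := by rw [hΔ]; ring
    rw [e] at h
    calc |Δ t - t ^ 2 * A| ≤ K * t ^ 2 * t := h
      _ = K * t ^ 3 := by ring
  -- Conclusion
  have final : ∀ t : ℝ, 0 < t → |A - B| ≤ 2 * K * t := by
    intro t ht
    have h1 := claimA t ht.le
    have h2 := claimB t ht.le
    have h3 : |t ^ 2 * B - t ^ 2 * A| ≤ 2 * K * t ^ 3 := by
      calc |t ^ 2 * B - t ^ 2 * A|
          = |(Δ t - t ^ 2 * A) - (Δ t - t ^ 2 * B)| := by ring_nf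
        _ ≤ |Δ t - t ^ 2 * A| + |Δ t - t ^ 2 * B| := abs_sub _ _
        _ ≤ K * t ^ 3 + K * t ^ 3 := add_le_add h1 h2
        _ = 2 * K * t ^ 3 := by ring
    have h4 : t ^ 2 * |B - A| ≤ t ^ 2 * (2 * K * t) := by
      calc t ^ 2 * |B - A| = |t ^ 2 * B - t ^ 2 * A| := by
            rw [← mul_sub, abs_mul, abs_of_nonneg (by positivity : (0:ℝ) ≤ t ^ 2)]
        _ ≤ 2 * K * t ^ 3 := h3
        _ = t ^ 2 * (2 * K * t) := by ring
    have h5 : |B - A| ≤ 2 * K * t :=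
      le_of_mul_le_mul_left (by linarith [h4]) (by positivity : (0:ℝ) < t ^ 2)
    rwa [abs_sub_comm] at h5
  by_contra hne
  have hpos : 0 < |A - B| := abs_pos.2 (sub_ne_zero.2 hne)
  have ht : 0 < |A - B| / (4 * K + 1) := by positivity
  have := final _ ht
  have : |A - B| ≤ 2 * K * (|A - B| / (4 * K + 1)) := this
  rw [← mul_div_assoc] at this
  have hd : (0:ℝ) < 4 * K + 1 := by linarith
  rw [le_div_iff₀ hd] at this
  nlinarith [hpos, hKnn]
end
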